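/- Let U ⊆ ℝ² be a nonempty open set, Γ : U → (ℝ² →ₗ[ℝ] ℝ² →ₗ[ℝ] ℝ²) a smooth symmetric Christoffel map, and Υ : U → (ℝ² →ₗ[ℝ] ℝ) a smooth 1-form. Define Γ̂ by Γ̂(x) u v = Γ(x) u v + Υ(x)(u) • v + Υ(x)(v) • u. Then the Ricci tensors are related by R̂_{ab} = R_{ab} − 2∇_aΥ_b + ∇_bΥ_a + Υ_aΥ_b, where ∇_aΥ_b := ∂_aΥ_b − Γ_{ab}{}^c Υ_c is the covariant derivative of Υ with respect to Γ. -/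

import Mathlib

noncomputable section

/-- The plane ℝ², as `Fin 2 → ℝ`. -/
abbrev E2 : Type := Fin 2 → ℝ

/-- The standard basis vectors of ℝ². -/
def bas (a : Fin 2) : E2 := Pi.single a 1

/-- Partial derivative ∂ₐ of a scalar function on ℝ². -/
def pd (a : Fin 2) (f : E2 → ℝ) (x : E2) : ℝ := fderiv ℝ f x (bas a)

/-- Components Γ_{ab}{}^c of a Christoffel map Γ : ℝ² → (ℝ² →ₗ ℝ² →ₗ ℝ²). -/
def chr (Γ : E2 → (E2 →ₗ[ℝ] E2 →ₗ[ℝ] E2)) (a b c : Fin 2) (x : E2) : ℝ :=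
  Γ x (bas a) (bas b) c

/-- Ricci tensor components built from Christoffel components `Γc a b c` (= Γ_{ab}{}^c):
`R_{ad} = ∂_cΓ_{ad}{}^c − ∂_aΓ_{cd}{}^c + Γ_{cb}{}^cΓ_{ad}{}^b − Γ_{ab}{}^cΓ_{cd}{}^b`. -/
def ricciC (Γc : Fin 2 → Fin 2 → Fin 2 → E2 → ℝ) (a d : Fin 2) (x : E2) : ℝ :=
  (∑ c, pd c (Γc a d c) x) - (∑ c, pd a (Γc c d c) x)
  + (∑ b, ∑ c, Γc c b c x * Γc a d b x)
  - (∑ b, ∑ c, Γc a b c x * Γc c d b x)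

/-- Covariant derivative of the Ricci tensor:
`∇_aR_{bc} = ∂_aR_{bc} − Γ_{ab}{}^dR_{dc} − Γ_{ac}{}^dR_{bd}`. -/
def covRicciC (Γc : Fin 2 → Fin 2 → Fin 2 → E2 → ℝ) (a b c : Fin 2) (x : E2) : ℝ :=
  pd a (ricciC Γc b c) x - (∑ d, Γc a b d x * ricciC Γc d c x)
    - (∑ d, Γc a c d x * ricciC Γc b d x)

/-- `Y_{abc} = ∇_aR_{bc} − ∇_bR_{ac}`. -/
def YC (Γc : Fin 2 → Fin 2 → Fin 2 → E2 → ℝ) (a b c : Fin 2) (x : E2) : ℝ :=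
  covRicciC Γc a b c x - covRicciC Γc b a c x

/-- Covariant derivative of a 1-form: `∇_aΥ_b = ∂_aΥ_b − Γ_{ab}{}^c Υ_c`. -/
def covForm (Γc : Fin 2 → Fin 2 → Fin 2 → E2 → ℝ) (Υ : E2 → (E2 →ₗ[ℝ] ℝ))
    (a b : Fin 2) (x : E2) : ℝ :=
  pd a (fun y => Υ y (bas b)) x - ∑ c, Γc a b c x * Υ x (bas c)

/-- under the projective change `Γ̂ₓ u v = Γₓ u v + Υₓ(u) • v + Υₓ(v) • u`,
the Ricci tensors are related by `R̂_{ab} = R_{ab} − 2∇_aΥ_b + ∇_bΥ_a + Υ_aΥ_b`. -/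
theorem stmt_2 (U : Set E2) (hUo : IsOpen U) (hUne : U.Nonempty)
    (Γ Γ' : E2 → (E2 →ₗ[ℝ] E2 →ₗ[ℝ] E2)) (Υ : E2 → (E2 →ₗ[ℝ] ℝ))
    (hΓs : ∀ a b c : Fin 2, ContDiffOn ℝ (⊤ : ℕ∞) (chr Γ a b c) U)
    (hsym : ∀ x ∈ U, ∀ u v : E2, Γ x u v = Γ x v u)
    (hΥs : ∀ a : Fin 2, ContDiffOn ℝ (⊤ : ℕ∞) (fun x => Υ x (bas a)) U)
    (hdef : ∀ x ∈ U, ∀ u v : E2, Γ' x u v = Γ x u v + Υ x u • v + Υ x v • u) :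
    ∀ x ∈ U, ∀ a b : Fin 2,
      ricciC (chr Γ') a b x
        = ricciC (chr Γ) a b x - 2 * covForm (chr Γ) Υ a b x + covForm (chr Γ) Υ b a x
          + Υ x (bas a) * Υ x (bas b) := by
  intro x hx a b
  have hmem : U ∈ nhds x := hUo.mem_nhds hx
  have hdiffG : ∀ a b c : Fin 2, DifferentiableAt ℝ (chr Γ a b c) x :=
    fun a b c => ((hΓs a b c).contDiffAt hmem).differentiableAt (by simp)
  have hdiffY : ∀ a : Fin 2, DifferentiableAt ℝ (fun y => Υ y (bas a)) x :=
    fun a => ((hΥs a).contDiffAt hmem).differentiableAt (by simp)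
  have hval : ∀ a b c : Fin 2, chr Γ' a b c x
      = chr Γ a b c x + bas b c * Υ x (bas a) + bas a c * Υ x (bas b) := by
    intro a b c
    simp only [chr, hdef x hx, Pi.add_apply, Pi.smul_apply, smul_eq_mul]
    ring
  have hpd : ∀ e a b c : Fin 2, pd e (chr Γ' a b c) x
      = pd e (chr Γ a b c) x + bas b c * pd e (fun y => Υ y (bas a)) x
        + bas a c * pd e (fun y => Υ y (bas b)) x := by
    intro e a b c
    have heq : (chr Γ' a b c) =ᶠ[nhds x]
        fun y => chr Γ a b c y + (bas b c * Υ y (bas a) + bas a c * Υ y (bas b)) := by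
      filter_upwards [hmem] with y hy
      simp only [chr, hdef y hy, Pi.add_apply, Pi.smul_apply, smul_eq_mul]
      ring
    have hF : HasFDerivAt
        (fun y => chr Γ a b c y + (bas b c * Υ y (bas a) + bas a c * Υ y (bas b)))
        (fderiv ℝ (chr Γ a b c) x + (bas b c • fderiv ℝ (fun y => Υ y (bas a)) x
          + bas a c • fderiv ℝ (fun y => Υ y (bas b)) x)) x :=
      ((hdiffG a b c).hasFDerivAt).add
        (((hdiffY a).hasFDerivAt.const_mul _).add ((hdiffY b).hasFDerivAt.const_mul _))
    simp only [pd, heq.fderiv_eq, hF.fderiv, ContinuousLinearMap.add_apply,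
      ContinuousLinearMap.coe_smul', Pi.smul_apply, smul_eq_mul]
    ring
  have hsymv : ∀ c : Fin 2, chr Γ (1:Fin 2) 0 c x = chr Γ 0 1 c x := by
    intro c; simp [chr, hsym x hx]
  have hsympd : ∀ e c : Fin 2, pd e (chr Γ (1:Fin 2) 0 c) x = pd e (chr Γ 0 1 c) x := by
    intro e c
    have heq : chr Γ (1:Fin 2) 0 c =ᶠ[nhds x] chr Γ 0 1 c := by
      filter_upwards [hmem] with y hy; simp [chr, hsym y hy]
    simp only [pd, heq.fderiv_eq]
  have e00 : bas (0:Fin 2) 0 = 1 := by simp [bas]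
  have e01 : bas (0:Fin 2) 1 = 0 := by simp [bas, Pi.single_apply]
  have e10 : bas (1:Fin 2) 0 = 0 := by simp [bas, Pi.single_apply]
  have e11 : bas (1:Fin 2) 1 = 1 := by simp [bas]
  simp only [ricciC, covForm, Fin.sum_univ_two, hpd, hval]
  fin_cases a <;> fin_cases b <;>
    · simp only [Fin.zero_eta, Fin.mk_one, Fin.isValue, e00, e01, e10, e11, hsymv, hsympd]
      ring
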